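/- arXiv:2112.00953 — 4 statements merged into one kernel-verified Lean document; each statement's English description precedes it below -/
import Mathlib

section
/- (Ideal single structure, inlier influence) Let f be the monotone Boolean function on {0,1}^n with combinatorial dimension p whose unique upper zero is b* at level k₁ (k₁ ≥ p+1): i.e., f(b) = 0 iff ‖b‖₁ ≤ p or b ≼ b*. Then for any coordinate i with b*_i = 1 (an inlier), the Bernoulli(q) weighted influence is Inf_i^q[f] = (C(n-1,p) - C(k₁-1,p)) · q^p (1-q)^{n-p-1}. -/
open Finset

/-- Hamming weight of a Boolean vector. -/
def wt {n : ℕ} (b : Fin n → Bool) : ℕ := (Finset.univ.filter fun i => b i = true).card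

/-- Bernoulli(q) measure of a single vertex of the cube. -/
noncomputable def mu {n : ℕ} (q : ℝ) (b : Fin n → Bool) : ℝ :=
  q ^ wt b * (1 - q) ^ (n - wt b)

/-- Flip the `i`-th bit. -/
def bflip {n : ℕ} (i : Fin n) (b : Fin n → Bool) : Fin n → Bool :=
  Function.update b i (!(b i))

/-- Bernoulli(q) weighted influence of coordinate `i` on `f`. -/
noncomputable def Infl {n : ℕ} (q : ℝ) (f : (Fin n → Bool) → Bool) (i : Fin n) : ℝ :=
  ∑ b : Fin n → Bool, if f b ≠ f (bflip i b) then mu q b else 0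

/-- The monotone Boolean function of a single ideal structure `bstar` with
combinatorial dimension parameter `p`: feasible (value 0) iff the subset has at
most `p` elements or is contained in the structure. -/
def fSingle {n : ℕ} (p : ℕ) (bstar : Fin n → Bool) (b : Fin n → Bool) : Bool :=
  if wt b ≤ p ∨ (∀ i, b i ≤ bstar i) then false else true

/-- Indicator vector of a finset. -/
lemma bne_decide_iff (a b : Prop) [Decidable a] [Decidable b] :
    ((!decide a) ≠ (!decide b)) ↔ ¬(a ↔ b) := by
  by_cases ha : a <;> by_cases hb : b <;> simp [ha, hb]

def eb {n : ℕ} (s : Finset (Fin n)) : Fin n → Bool := fun j => decide (j ∈ s)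

lemma wt_eb {n : ℕ} (s : Finset (Fin n)) : wt (eb s) = s.card := by
  unfold wt eb
  congr 1
  ext j
  simp

/-- Finsets are equivalent to Boolean vectors. -/
def ebEquiv (n : ℕ) : Finset (Fin n) ≃ (Fin n → Bool) where
  toFun := eb
  invFun b := Finset.univ.filter fun j => b j = true
  left_inv s := by ext j; simp [eb]
  right_inv b := by funext j; cases h : b j <;> simp [eb, h]

theorem ideal_single_inlier_influence {n p k₁ : ℕ} (hpk : p < k₁) (hkn : k₁ < n)
    (q : ℝ) (hq : q ∈ Set.Ioo (0:ℝ) 1)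
    (bstar : Fin n → Bool) (hb : wt bstar = k₁) (i : Fin n) (hi : bstar i = true) :
    Infl q (fSingle p bstar) i =
      (((n - 1).choose p : ℝ) - ((k₁ - 1).choose p : ℝ)) * q ^ p * (1 - q) ^ (n - p - 1) := by
  classical
  set B : Finset (Fin n) := Finset.univ.filter (fun j => bstar j = true) with hBdef
  have hiB : i ∈ B := by simp [hBdef, hi]
  have hBcard : B.card = k₁ := hb
  -- characterization of feasibility over finsets
  have hle : ∀ s : Finset (Fin n), (∀ j, eb s j ≤ bstar j) ↔ s ⊆ B := by
    intro s
    constructor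
    · intro h j hjs
      have h1 := h j
      rw [show eb s j = true from decide_eq_true hjs] at h1
      have h2 : bstar j = true := by
        cases hbj : bstar j
        · rw [hbj] at h1; exact absurd h1 (by decide)
        · rfl
      simp [hBdef, h2]
    · intro h j
      by_cases hj : j ∈ s
      · have hjB := h hj
        have : bstar j = true := by simpa [hBdef] using hjB
        simp [eb, hj, this]
      · simp [eb, hj]
  have hf : ∀ s : Finset (Fin n),
      fSingle p bstar (eb s) = false ↔ (s.card ≤ p ∨ s ⊆ B) := by
    intro s
    by_cases h : s.card ≤ p ∨ s ⊆ B
    · have h' : wt (eb s) ≤ p ∨ (∀ j, eb s j ≤ bstar j) := by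
        rw [wt_eb, hle s]; exact h
      simp [fSingle, h', h]
    · have h' : ¬(wt (eb s) ≤ p ∨ (∀ j, eb s j ≤ bstar j)) := by
        rw [wt_eb, hle s]; exact h
      simp [fSingle, h', h]
  have hfd : ∀ s : Finset (Fin n),
      fSingle p bstar (eb s) = !decide (s.card ≤ p ∨ s ⊆ B) := by
    intro s
    by_cases h : s.card ≤ p ∨ s ⊆ B
    · rw [(hf s).mpr h]; simp [h]
    · have h1 : fSingle p bstar (eb s) ≠ false := fun hc => h ((hf s).mp hc)
      rw [Bool.ne_false_iff.mp h1]; simp [h]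
  -- flipping bit i on indicator vectors
  have hflip1 : ∀ t : Finset (Fin n), i ∉ t → bflip i (eb t) = eb (insert i t) := by
    intro t hit
    funext j
    by_cases hj : j = i
    · subst hj; simp [bflip, eb, hit]
    · simp [bflip, eb, Function.update_of_ne hj, hj]
  have hflip2 : ∀ t : Finset (Fin n), i ∉ t → bflip i (eb (insert i t)) = eb t := by
    intro t hit
    funext j
    by_cases hj : j = i
    · subst hj; simp [bflip, eb, hit]
    · simp [bflip, eb, Function.update_of_ne hj, hj]
  -- characterization of when coordinate i is pivotal
  have hcond : ∀ t : Finset (Fin n), i ∉ t →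
      ((fSingle p bstar (eb t) ≠ fSingle p bstar (bflip i (eb t))) ↔
        (t.card = p ∧ ¬ t ⊆ B)) := by
    intro t hit
    rw [hflip1 t hit, hfd t, hfd (insert i t)]
    have hsub_iff : insert i t ⊆ B ↔ t ⊆ B := by
      rw [insert_subset_iff]; simp [hiB]
    rw [card_insert_of_notMem hit, bne_decide_iff, hsub_iff]
    by_cases hsub : t ⊆ B
    · simp [hsub]
    · simp only [hsub, or_false, not_false_eq_true, and_true]
      omega
  have hcond2 : ∀ t : Finset (Fin n), i ∉ t →
      ((fSingle p bstar (eb (insert i t)) ≠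
          fSingle p bstar (bflip i (eb (insert i t)))) ↔
        (t.card = p ∧ ¬ t ⊆ B)) := by
    intro t hit
    have h := hcond t hit
    rw [hflip1 t hit] at h
    rw [hflip2 t hit, ne_comm]
    exact h
  -- rewrite the influence as a sum over finsets
  have hsum : Infl q (fSingle p bstar) i
      = ∑ s : Finset (Fin n),
          (if fSingle p bstar (eb s) ≠ fSingle p bstar (bflip i (eb s))
            then mu q (eb s) else 0) := by
    unfold Infl
    exact (Fintype.sum_equiv (ebEquiv n) _ _ (fun s => rfl)).symm
  rw [hsum]
  have huniv : (Finset.univ : Finset (Finset (Fin n)))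
      = ((insert i ((Finset.univ : Finset (Fin n)).erase i)).powerset) := by
    rw [insert_erase (mem_univ i), powerset_univ]
  rw [huniv, Finset.sum_powerset_insert (notMem_erase i _), ← Finset.sum_add_distrib]
  have hnp1 : n - (p + 1) = n - p - 1 := by omega
  have hnp : n - p = (n - p - 1) + 1 := by omega
  set c : ℝ := q ^ p * (1 - q) ^ (n - p) + q ^ (p + 1) * (1 - q) ^ (n - p - 1) with hc
  have hterm : ∀ t ∈ ((Finset.univ : Finset (Fin n)).erase i).powerset,
      ((if fSingle p bstar (eb t) ≠ fSingle p bstar (bflip i (eb t))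
          then mu q (eb t) else 0)
        + (if fSingle p bstar (eb (insert i t)) ≠
              fSingle p bstar (bflip i (eb (insert i t)))
            then mu q (eb (insert i t)) else 0))
      = if t.card = p ∧ ¬ t ⊆ B then c else 0 := by
    intro t ht
    have hit : i ∉ t := fun h => (notMem_erase i _) (mem_powerset.mp ht h)
    by_cases hQ : t.card = p ∧ ¬ t ⊆ B
    · rw [if_pos ((hcond t hit).mpr hQ), if_pos ((hcond2 t hit).mpr hQ), if_pos hQ]
      unfold mu
      rw [wt_eb, wt_eb, card_insert_of_notMem hit, hQ.1, hc, hnp1]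
    · rw [if_neg (fun h => hQ ((hcond t hit).mp h)),
        if_neg (fun h => hQ ((hcond2 t hit).mp h)), if_neg hQ, add_zero]
  rw [Finset.sum_congr rfl hterm, ← Finset.sum_filter, Finset.sum_const, nsmul_eq_mul]
  -- count the pivotal sets
  have hset : ((Finset.univ : Finset (Fin n)).erase i).powerset.filter
        (fun t => t.card = p ∧ ¬ t ⊆ B)
      = powersetCard p ((Finset.univ : Finset (Fin n)).erase i)
          \ powersetCard p (B.erase i) := by
    ext t
    simp only [mem_filter, mem_powerset, mem_sdiff, mem_powersetCard]
    constructor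
    · rintro ⟨hts, hcp, htB⟩
      have hit : i ∉ t := fun h => (notMem_erase i _) (hts h)
      refine ⟨⟨hts, hcp⟩, ?_⟩
      rintro ⟨htB', -⟩
      exact htB (htB'.trans (erase_subset i B))
    · rintro ⟨⟨hts, hcp⟩, hnot⟩
      have hit : i ∉ t := fun h => (notMem_erase i _) (hts h)
      refine ⟨hts, hcp, fun htB => hnot ⟨subset_erase.mpr ⟨htB, hit⟩, hcp⟩⟩
  have hcard1 : ((Finset.univ : Finset (Fin n)).erase i).card = n - 1 := by
    rw [card_erase_of_mem (mem_univ i), card_univ, Fintype.card_fin]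
  have hcard2 : (B.erase i).card = k₁ - 1 := by
    rw [card_erase_of_mem hiB, hBcard]
  have hsubpow : powersetCard p (B.erase i)
      ⊆ powersetCard p ((Finset.univ : Finset (Fin n)).erase i) :=
    powersetCard_mono (erase_subset_erase i (subset_univ B))
  have hcount : (((Finset.univ : Finset (Fin n)).erase i).powerset.filter
        (fun t => t.card = p ∧ ¬ t ⊆ B)).card
      = (n - 1).choose p - (k₁ - 1).choose p := by
    rw [hset, card_sdiff_of_subset hsubpow, card_powersetCard, card_powersetCard, hcard1, hcard2]
  rw [hcount]
  have hchle : (k₁ - 1).choose p ≤ (n - 1).choose p :=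
    Nat.choose_le_choose p (by omega)
  rw [Nat.cast_sub hchle]
  have hpow := pow_succ (1 - q) (n - p - 1)
  have he : n - p - 1 + 1 = n - p := by omega
  rw [he] at hpow
  rw [hc, hpow, pow_succ]
  ring
end

section
/- (Ideal single structure, outlier influence) Let f be the monotone Boolean function on {0,1}^n defined by f(b) = 0 iff ‖b‖₁ ≤ p or b ≼ b*, where ‖b*‖₁ = k₁ > p. Then for any coordinate i with b*_i = 0 (an outlier), the Bernoulli(q) weighted influence is Inf_i^q[f] = C(n-1,p) q^p (1-q)^{n-p-1} + Σ_{l=p+1}^{k₁} C(k₁,l) q^l (1-q)^{n-l-1}. -/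
open Finset

lemma bflip_bflip {n : ℕ} (i : Fin n) (b : Fin n → Bool) : bflip i (bflip i b) = b := by
  funext j
  by_cases hj : j = i <;> simp [bflip, Function.update_apply, hj]

lemma bflip_apply_self {n : ℕ} (i : Fin n) (b : Fin n → Bool) : bflip i b i = !(b i) := by
  simp [bflip]

lemma wt_bflip_of_false {n : ℕ} (i : Fin n) (b : Fin n → Bool) (h : b i = false) :
    wt (bflip i b) = wt b + 1 := by
  unfold wt
  have hset : (Finset.univ.filter fun j => bflip i b j = true)
      = insert i (Finset.univ.filter fun j => b j = true) := by
    ext j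
    by_cases hj : j = i <;> simp [bflip, Function.update_apply, hj, h]
  rw [hset, Finset.card_insert_of_notMem (by simp [h])]

lemma wt_lt_of_false {n : ℕ} (i : Fin n) (b : Fin n → Bool) (h : b i = false) :
    wt b < n := by
  unfold wt
  have hsub : (Finset.univ.filter fun j => b j = true) ⊆ Finset.univ.erase i := by
    intro j hj
    simp only [Finset.mem_filter, Finset.mem_univ, true_and] at hj
    refine Finset.mem_erase.2 ⟨?_, Finset.mem_univ _⟩
    rintro rfl; rw [h] at hj; exact Bool.false_ne_true hj
  have := Finset.card_le_card hsub
  rw [Finset.card_erase_of_mem (Finset.mem_univ i), Finset.card_univ, Fintype.card_fin] at this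
  have hn : 0 < n := i.pos
  omega

/-- generic counting lemma: vectors dominated by `c` of weight `l`. -/
lemma card_wt_le {n : ℕ} (c : Fin n → Bool) (l : ℕ) :
    (Finset.univ.filter fun b : Fin n → Bool => (∀ j, b j ≤ c j) ∧ wt b = l).card
      = (wt c).choose l := by
  rw [show (wt c).choose l = ((Finset.univ.filter fun j => c j = true).powersetCard l).card from
    (Finset.card_powersetCard l _).symm]
  apply Finset.card_bij' (fun b _ => Finset.univ.filter fun j => b j = true)
    (fun S _ => fun j => decide (j ∈ S))
  case hi =>
    intro b hbm
    simp only [Finset.mem_filter, Finset.mem_univ, true_and] at hbm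
    rw [Finset.mem_powersetCard]
    refine ⟨fun j hj => ?_, hbm.2⟩
    simp only [Finset.mem_filter, Finset.mem_univ, true_and] at hj ⊢
    exact Bool.le_iff_imp.mp (hbm.1 j) hj
  case hj =>
    intro S hS
    rw [Finset.mem_powersetCard] at hS
    simp only [Finset.mem_filter, Finset.mem_univ, true_and]
    constructor
    · intro j
      rw [Bool.le_iff_imp]
      intro hj
      have hjS : j ∈ S := by simpa using hj
      have := hS.1 hjS
      simpa using this
    · rw [← hS.2]
      unfold wt
      congr 1
      ext j; simp
  case left_inv =>
    intro b _
    funext j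
    simp
  case right_inv =>
    intro S _
    ext j; simp

lemma wt_le_of_le {n : ℕ} {b c : Fin n → Bool} (h : ∀ j, b j ≤ c j) : wt b ≤ wt c := by
  apply Finset.card_le_card
  intro j hj
  simp only [Finset.mem_filter, Finset.mem_univ, true_and] at hj ⊢
  exact Bool.le_iff_imp.mp (h j) hj

theorem ideal_single_outlier_influence {n p k₁ : ℕ} (hpk : p < k₁) (hkn : k₁ < n)
    (q : ℝ) (hq : q ∈ Set.Ioo (0:ℝ) 1)
    (bstar : Fin n → Bool) (hb : wt bstar = k₁) (i : Fin n) (hi : bstar i = false) :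
    Infl q (fSingle p bstar) i =
      ((n - 1).choose p : ℝ) * q ^ p * (1 - q) ^ (n - p - 1) +
        ∑ l ∈ Finset.Icc (p + 1) k₁, (k₁.choose l : ℝ) * q ^ l * (1 - q) ^ (n - l - 1) := by
  obtain ⟨hq0, hq1⟩ := hq
  set f := fSingle p bstar with hf
  -- Step 1: pair up across the edge in direction i
  have step1 : Infl q f i
      = ∑ b ∈ Finset.univ.filter (fun b : Fin n → Bool => b i = false),
          (if f b ≠ f (bflip i b) then mu q b + mu q (bflip i b) else 0) := by
    unfold Infl
    rw [← Finset.sum_filter_add_sum_filter_not Finset.univ (fun b : Fin n → Bool => b i = false)]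
    have h2 : ∑ b ∈ Finset.univ.filter (fun b : Fin n → Bool => ¬ b i = false),
          (if f b ≠ f (bflip i b) then mu q b else 0)
        = ∑ b ∈ Finset.univ.filter (fun b : Fin n → Bool => b i = false),
          (if f b ≠ f (bflip i b) then mu q (bflip i b) else 0) := by
      apply Finset.sum_nbij' (bflip i) (bflip i)
      · intro b hbm
        simp only [Finset.mem_filter, Finset.mem_univ, true_and] at hbm ⊢
        rw [bflip_apply_self]
        simp only [Bool.not_eq_false] at hbm
        simp [hbm]
      · intro b hbm
        simp only [Finset.mem_filter, Finset.mem_univ, true_and] at hbm ⊢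
        rw [bflip_apply_self, hbm]; simp
      · intro b _; exact bflip_bflip i b
      · intro b _; exact bflip_bflip i b
      · intro b _
        rw [bflip_bflip]
        by_cases h : f b = f (bflip i b)
        · simp [h]
        · simp [h, Ne.symm h, ne_comm]
    rw [h2, ← Finset.sum_add_distrib]
    apply Finset.sum_congr rfl
    intro b _
    by_cases h : f b = f (bflip i b) <;> simp [h]
  rw [step1]
  -- Step 2: characterize the differing condition and the pair measure
  have step2 : ∀ b ∈ Finset.univ.filter (fun b : Fin n → Bool => b i = false),
      (if f b ≠ f (bflip i b) then mu q b + mu q (bflip i b) else 0)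
      = (if wt b = p then q ^ (wt b) * (1 - q) ^ (n - wt b - 1) else 0)
        + (if (∀ j, b j ≤ bstar j) ∧ p + 1 ≤ wt b
            then q ^ (wt b) * (1 - q) ^ (n - wt b - 1) else 0) := by
    intro b hbm
    simp only [Finset.mem_filter, Finset.mem_univ, true_and] at hbm
    have hwlt : wt b < n := wt_lt_of_false i b hbm
    have hwflip : wt (bflip i b) = wt b + 1 := wt_bflip_of_false i b hbm
    have hnotle : ¬ (∀ j, bflip i b j ≤ bstar j) := by
      intro h
      have := h i
      rw [bflip_apply_self, hbm, hi] at this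
      exact absurd this (by decide)
    have hpair : mu q b + mu q (bflip i b) = q ^ (wt b) * (1 - q) ^ (n - wt b - 1) := by
      unfold mu
      obtain ⟨m, hm⟩ : ∃ m, n - wt b - 1 = m := ⟨_, rfl⟩
      rw [hwflip, show n - (wt b + 1) = m from by omega,
        show n - wt b = m + 1 from by omega]
      simp only [Nat.add_sub_cancel, pow_succ]
      ring
    have hdiff : (f b ≠ f (bflip i b))
        ↔ (wt b = p ∨ ((∀ j, b j ≤ bstar j) ∧ p + 1 ≤ wt b)) := by
      have h1 : f b = false ↔ (wt b ≤ p ∨ ∀ j, b j ≤ bstar j) := by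
        rw [hf]; unfold fSingle
        by_cases h : wt b ≤ p ∨ ∀ j, b j ≤ bstar j <;> simp [h]
      have h2 : f (bflip i b) = false ↔ wt b + 1 ≤ p := by
        rw [hf]; unfold fSingle; rw [hwflip]
        by_cases h : wt b + 1 ≤ p ∨ ∀ j, bflip i b j ≤ bstar j
        · rcases h with h | h
          · simp [h, Or.inl h]
          · exact absurd h hnotle
        · have h' : ¬ (wt b + 1 ≤ p) := fun hh => h (Or.inl hh)
          rw [if_neg h]
          simp [h']
      cases hfb : f b <;> cases hfl : f (bflip i b) <;> rw [hfb] at h1 <;> rw [hfl] at h2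
      · constructor
        · intro h; exact absurd rfl h
        · have hy := h2.mp rfl
          rintro (h | ⟨_, h⟩) <;> exact absurd hy (by omega)
      · have hx := h1.mp rfl
        constructor
        · intro _
          have hy : ¬ (wt b + 1 ≤ p) := fun hh => by simpa using h2.mpr hh
          rcases hx with h | h
          · left; omega
          · by_cases hle : wt b ≤ p
            · left; omega
            · right; exact ⟨h, by omega⟩
        · intro _; simp
      · exfalso
        have hy := h2.mp rfl
        have hx : ¬ (wt b ≤ p ∨ ∀ j, b j ≤ bstar j) := fun hh => by simpa using h1.mpr hh
        exact hx (Or.inl (by omega))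
      · have hx : ¬ (wt b ≤ p ∨ ∀ j, b j ≤ bstar j) := fun hh => by simpa using h1.mpr hh
        constructor
        · intro h; exact absurd rfl h
        · rintro (h | ⟨h, _⟩)
          · exact absurd (Or.inl (le_of_eq h)) hx
          · exact absurd (Or.inr h) hx
    by_cases hc : wt b = p
    · have hc2 : ¬ ((∀ j, b j ≤ bstar j) ∧ p + 1 ≤ wt b) := by
        rintro ⟨_, h⟩; omega
      rw [if_pos hc, if_neg hc2, if_pos (hdiff.mpr (Or.inl hc)), hpair]
      ring
    · rw [if_neg hc]
      by_cases hc2 : (∀ j, b j ≤ bstar j) ∧ p + 1 ≤ wt b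
      · rw [if_pos hc2, if_pos (hdiff.mpr (Or.inr hc2)), hpair]
        ring
      · rw [if_neg hc2, if_neg (by rw [hdiff]; tauto)]
        ring
  rw [Finset.sum_congr rfl step2, Finset.sum_add_distrib]
  congr 1
  -- first term : weight exactly p, coordinate i false
  · rw [Finset.sum_ite, Finset.sum_const_zero, add_zero, Finset.filter_filter]
    have hconst : ∀ b ∈ Finset.univ.filter (fun b : Fin n → Bool => b i = false ∧ wt b = p),
        q ^ (wt b) * (1 - q) ^ (n - wt b - 1) = q ^ p * (1 - q) ^ (n - p - 1) := by
      intro b hbm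
      simp only [Finset.mem_filter, Finset.mem_univ, true_and] at hbm
      rw [hbm.2]
    rw [Finset.sum_congr rfl hconst, Finset.sum_const, nsmul_eq_mul]
    have hcard : (Finset.univ.filter fun b : Fin n → Bool => b i = false ∧ wt b = p).card
        = (n - 1).choose p := by
      have hc := card_wt_le (fun j => decide (j ≠ i)) p
      have hwc : wt (fun j : Fin n => decide (j ≠ i)) = n - 1 := by
        unfold wt
        have : (Finset.univ.filter fun j : Fin n => decide (j ≠ i) = true)
            = Finset.univ.erase i := by
          ext j; simp [Finset.mem_erase]
        rw [this, Finset.card_erase_of_mem (Finset.mem_univ i), Finset.card_univ,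
          Fintype.card_fin]
      rw [hwc] at hc
      rw [← hc]
      congr 1
      ext b
      simp only [Finset.mem_filter, Finset.mem_univ, true_and, and_congr_left_iff]
      intro _
      constructor
      · intro hbi j
        rw [Bool.le_iff_imp]
        intro hj
        simp only [decide_eq_true_eq]
        rintro rfl
        rw [hbi] at hj
        exact Bool.false_ne_true hj
      · intro h
        have hii := h i
        have hdec : (decide (i ≠ i)) = false := by simp
        rw [hdec] at hii
        cases hbv : b i
        · rfl
        · rw [hbv] at hii; exact absurd hii (by decide)
    rw [hcard]
    ring
  -- second term : dominated by bstar, weight in Icc (p+1) k₁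
  · rw [Finset.sum_ite, Finset.sum_const_zero, add_zero, Finset.filter_filter]
    have hsetname : (Finset.univ.filter fun b : Fin n → Bool =>
          b i = false ∧ ((∀ j, b j ≤ bstar j) ∧ p + 1 ≤ wt b))
        = Finset.univ.filter fun b : Fin n → Bool => (∀ j, b j ≤ bstar j) ∧ p + 1 ≤ wt b := by
      ext b
      simp only [Finset.mem_filter, Finset.mem_univ, true_and]
      constructor
      · rintro ⟨_, h⟩; exact h
      · intro h
        refine ⟨?_, h⟩
        have := h.1 i
        rw [hi] at this
        exact le_antisymm this (Bool.false_le _)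
    rw [hsetname]
    have hmap : ∀ b ∈ Finset.univ.filter fun b : Fin n → Bool =>
          (∀ j, b j ≤ bstar j) ∧ p + 1 ≤ wt b, wt b ∈ Finset.Icc (p+1) k₁ := by
      intro b hbm
      simp only [Finset.mem_filter, Finset.mem_univ, true_and] at hbm
      rw [Finset.mem_Icc]
      exact ⟨hbm.2, hb ▸ wt_le_of_le hbm.1⟩
    rw [← Finset.sum_fiberwise_of_maps_to hmap
      (fun b => q ^ (wt b) * (1 - q) ^ (n - wt b - 1))]
    apply Finset.sum_congr rfl
    intro l hl
    rw [Finset.mem_Icc] at hl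
    have hconst : ∀ b ∈ (Finset.univ.filter fun b : Fin n → Bool =>
          (∀ j, b j ≤ bstar j) ∧ p + 1 ≤ wt b).filter (fun b => wt b = l),
        q ^ (wt b) * (1 - q) ^ (n - wt b - 1) = q ^ l * (1 - q) ^ (n - l - 1) := by
      intro b hbm
      simp only [Finset.mem_filter, Finset.mem_univ, true_and] at hbm
      rw [hbm.2]
    rw [Finset.sum_congr rfl hconst, Finset.sum_const, nsmul_eq_mul]
    have hcard : ((Finset.univ.filter fun b : Fin n → Bool =>
          (∀ j, b j ≤ bstar j) ∧ p + 1 ≤ wt b).filter (fun b => wt b = l)).card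
        = k₁.choose l := by
      rw [Finset.filter_filter]
      have hc := card_wt_le bstar l
      rw [hb] at hc
      rw [← hc]
      congr 1
      ext b
      simp only [Finset.mem_filter, Finset.mem_univ, true_and]
      constructor
      · rintro ⟨⟨h1, _⟩, h3⟩; exact ⟨h1, h3⟩
      · rintro ⟨h1, h3⟩
        exact ⟨⟨h1, le_of_le_of_eq hl.1 h3.symm⟩, h3⟩
    rw [hcard]
    ring
end

section
/- (Ideal single structure, outlier–inlier gap) With f defined by f(b) = 0 iff ‖b‖₁ ≤ p or b ≼ b* (where ‖b*‖₁ = k₁ > p), every outlier has strictly larger weighted influence than every inlier: if b*_{i₁} = 0 and b*_{i₂} = 1 then Inf_{i₁}^q[f] - Inf_{i₂}^q[f] = C(k₁-1,p) q^p (1-q)^{n-p-1} + Σ_{l=p+1}^{k₁} C(k₁,l) q^l (1-q)^{n-l-1} > 0. -/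
open Finset

namespace IdealAux

variable {n : ℕ}

def toF (s : Finset (Fin n)) : Fin n → Bool := fun i => decide (i ∈ s)

lemma wt_toF (s : Finset (Fin n)) : wt (toF s) = s.card := by
  unfold wt toF; congr 1; ext i; simp

lemma toF_bij : Function.Bijective (toF (n := n)) := by
  rw [Fintype.bijective_iff_injective_and_card]
  constructor
  · intro s t h
    ext i
    have := congrFun h i
    simpa [toF] using this
  · simp [Fintype.card_finset]

lemma bflip_toF_notmem (i : Fin n) (s : Finset (Fin n)) (h : i ∉ s) :
    bflip i (toF s) = toF (insert i s) := by
  funext j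
  rcases eq_or_ne j i with rfl | hj
  · simp [bflip, toF, h]
  · simp [bflip, toF, Function.update_of_ne hj, hj]

lemma bflip_toF_mem (i : Fin n) (s : Finset (Fin n)) (h : i ∉ s) :
    bflip i (toF (insert i s)) = toF s := by
  funext j
  rcases eq_or_ne j i with rfl | hj
  · simp [bflip, toF, h]
  · simp [bflip, toF, Function.update_of_ne hj, hj]

lemma fSingle_toF (p : ℕ) (bstar : Fin n → Bool) (s : Finset (Fin n)) :
    fSingle p bstar (toF s) =
      if s.card ≤ p ∨ s ⊆ Finset.univ.filter (fun i => bstar i = true) then false else true := by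
  unfold fSingle
  rw [wt_toF]
  congr 1
  apply propext
  constructor
  · rintro (h | h)
    · exact Or.inl h
    · refine Or.inr fun i hi => ?_
      have hle := Bool.le_iff_imp.mp (h i)
      simp only [toF, decide_eq_true_eq] at hle
      simp only [mem_filter, mem_univ, true_and]
      exact hle hi
  · rintro (h | h)
    · exact Or.inl h
    · refine Or.inr fun i => ?_
      rw [Bool.le_iff_imp]
      intro hi
      simp only [toF, decide_eq_true_eq] at hi
      have := h hi
      simp only [mem_filter] at this
      exact this.2

lemma Infl_eq (q : ℝ) (f : (Fin n → Bool) → Bool) (i : Fin n) :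
    Infl q f i = ∑ s ∈ ((univ : Finset (Fin n)).erase i).powerset,
      ((if f (toF s) ≠ f (bflip i (toF s)) then mu q (toF s) else 0) +
       (if f (toF (insert i s)) ≠ f (bflip i (toF (insert i s))) then
          mu q (toF (insert i s)) else 0)) := by
  unfold Infl
  rw [← (Fintype.sum_bijective toF toF_bij _ _ (fun s => rfl))]
  have hsplit : (univ : Finset (Finset (Fin n))) =
      ((univ : Finset (Fin n)).erase i).powerset ∪
        (((univ : Finset (Fin n)).erase i).powerset.image (insert i)) := by
    rw [← powerset_insert, insert_erase (mem_univ i), powerset_univ]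
  rw [hsplit, sum_union, sum_image, ← sum_add_distrib]
  · intro x hx y hy hxy
    have hxi : i ∉ x := fun h => (mem_erase.mp (mem_powerset.mp hx h)).1 rfl
    have hyi : i ∉ y := fun h => (mem_erase.mp (mem_powerset.mp hy h)).1 rfl
    rw [← erase_insert hxi, ← erase_insert hyi, hxy]
  · rw [Finset.disjoint_left]
    intro s hs hs2
    have hsi : i ∉ s := fun h => (mem_erase.mp (mem_powerset.mp hs h)).1 rfl
    obtain ⟨t, _, rfl⟩ := mem_image.mp hs2
    exact hsi (mem_insert_self i t)

lemma Infl_formula (q : ℝ) (f : (Fin n → Bool) → Bool) (i : Fin n) :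
    Infl q f i = ∑ s ∈ ((univ : Finset (Fin n)).erase i).powerset,
      (if f (toF s) ≠ f (toF (insert i s)) then
        q ^ s.card * (1 - q) ^ (n - s.card - 1) else 0) := by
  rw [Infl_eq]
  refine sum_congr rfl fun s hs => ?_
  have hsub := mem_powerset.mp hs
  have hi : i ∉ s := fun h => (mem_erase.mp (hsub h)).1 rfl
  have hc : s.card < n := by
    have h1 : s.card ≤ ((univ : Finset (Fin n)).erase i).card := card_le_card hsub
    have h2 : ((univ : Finset (Fin n)).erase i).card = n - 1 := by
      rw [card_erase_of_mem (mem_univ i), card_univ, Fintype.card_fin]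
    have hn : 0 < n := i.pos
    omega
  rw [bflip_toF_notmem i s hi, bflip_toF_mem i s hi]
  by_cases hne : f (toF s) = f (toF (insert i s))
  · simp [hne]
  · have hne' : f (toF (insert i s)) ≠ f (toF s) := fun h => hne h.symm
    simp only [ne_eq, hne, hne', not_false_eq_true, if_true]
    unfold mu
    rw [wt_toF, wt_toF, card_insert_of_notMem hi]
    have e2 : n - (s.card + 1) = n - s.card - 1 := by omega
    rw [e2]
    set m := n - s.card - 1 with hm
    have e1 : n - s.card = m + 1 := by omega
    rw [e1, pow_succ, pow_succ]
    ring

end IdealAux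

open IdealAux

theorem ideal_single_outlier_minus_inlier {n p k₁ : ℕ} (hpk : p < k₁) (hkn : k₁ < n)
    (q : ℝ) (hq : q ∈ Set.Ioo (0:ℝ) 1)
    (bstar : Fin n → Bool) (hb : wt bstar = k₁)
    (i₁ i₂ : Fin n) (hi₁ : bstar i₁ = false) (hi₂ : bstar i₂ = true) :
    Infl q (fSingle p bstar) i₁ - Infl q (fSingle p bstar) i₂ =
        ((k₁ - 1).choose p : ℝ) * q ^ p * (1 - q) ^ (n - p - 1) +
          ∑ l ∈ Finset.Icc (p + 1) k₁, (k₁.choose l : ℝ) * q ^ l * (1 - q) ^ (n - l - 1) ∧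
      0 < ((k₁ - 1).choose p : ℝ) * q ^ p * (1 - q) ^ (n - p - 1) +
          ∑ l ∈ Finset.Icc (p + 1) k₁, (k₁.choose l : ℝ) * q ^ l * (1 - q) ^ (n - l - 1) := by
  obtain ⟨hq0, hq1⟩ := hq
  set S : Finset (Fin n) := Finset.univ.filter (fun i => bstar i = true) with hSdef
  have hScard : S.card = k₁ := hb
  have hi₁S : i₁ ∉ S := by simp [hSdef, hi₁]
  have hi₂S : i₂ ∈ S := by simp [hSdef, hi₂]
  have hcard_erase : ∀ i : Fin n, ((univ : Finset (Fin n)).erase i).card = n - 1 := by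
    intro i
    rw [card_erase_of_mem (mem_univ i), card_univ, Fintype.card_fin]
  -- condition for the outlier
  have cond1 : ∀ s : Finset (Fin n), i₁ ∉ s →
      ((fSingle p bstar (toF s) ≠ fSingle p bstar (toF (insert i₁ s))) ↔
        (s.card = p ∨ (s ⊆ S ∧ p < s.card))) := by
    intro s hi
    rw [fSingle_toF, fSingle_toF, ← hSdef]
    have hic : (insert i₁ s).card = s.card + 1 := card_insert_of_notMem hi
    have his : ¬ (insert i₁ s ⊆ S) := fun h => hi₁S (h (mem_insert_self _ _))
    by_cases h1 : s.card ≤ p <;> by_cases h2 : s ⊆ S <;>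
      by_cases h3 : s.card + 1 ≤ p <;>
        simp [h1, h2, h3, hic, his] <;> omega
  -- condition for the inlier
  have cond2 : ∀ s : Finset (Fin n), i₂ ∉ s →
      ((fSingle p bstar (toF s) ≠ fSingle p bstar (toF (insert i₂ s))) ↔
        (s.card = p ∧ ¬ s ⊆ S)) := by
    intro s hi
    rw [fSingle_toF, fSingle_toF, ← hSdef]
    have hic : (insert i₂ s).card = s.card + 1 := card_insert_of_notMem hi
    have his : (insert i₂ s ⊆ S) ↔ s ⊆ S := by
      rw [insert_subset_iff]
      simp [hi₂S]
    by_cases h1 : s.card ≤ p <;> by_cases h2 : s ⊆ S <;>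
      by_cases h3 : s.card + 1 ≤ p <;>
        simp [h1, h2, h3, hic, his] <;> omega
  -- the outlier influence
  have F1 : Infl q (fSingle p bstar) i₁ =
      ((n - 1).choose p : ℝ) * (q ^ p * (1 - q) ^ (n - p - 1)) +
        ∑ l ∈ Finset.Icc (p + 1) k₁, (k₁.choose l : ℝ) * q ^ l * (1 - q) ^ (n - l - 1) := by
    rw [Infl_formula]
    have step : ∀ s ∈ ((univ : Finset (Fin n)).erase i₁).powerset,
        (if fSingle p bstar (toF s) ≠ fSingle p bstar (toF (insert i₁ s)) then
            q ^ s.card * (1 - q) ^ (n - s.card - 1) else 0) =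
          (if s.card = p then q ^ s.card * (1 - q) ^ (n - s.card - 1) else 0) +
          (if s ⊆ S ∧ p < s.card then q ^ s.card * (1 - q) ^ (n - s.card - 1) else 0) := by
      intro s hs
      have hi : i₁ ∉ s := fun h => (mem_erase.mp (mem_powerset.mp hs h)).1 rfl
      rw [if_congr (cond1 s hi) rfl rfl]
      by_cases h1 : s.card = p <;> by_cases h2 : s ⊆ S ∧ p < s.card <;>
        simp [h1, h2] <;> omega
    rw [sum_congr rfl step, sum_add_distrib]
    congr 1
    · rw [← sum_filter, ← powersetCard_eq_filter]
      refine (sum_congr rfl fun s hs => by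
        rw [(mem_powersetCard.mp hs).2]).trans ?_
      rw [sum_const, card_powersetCard, hcard_erase, nsmul_eq_mul]
    · have hsub : S.powerset ⊆ ((univ : Finset (Fin n)).erase i₁).powerset :=
        powerset_mono.mpr (subset_erase.mpr ⟨subset_univ S, hi₁S⟩)
      rw [← Finset.sum_subset hsub (fun s _ hns => by
        rw [if_neg]
        intro hcon
        exact hns (mem_powerset.mpr hcon.1))]
      have step2 : ∀ s ∈ S.powerset,
          (if s ⊆ S ∧ p < s.card then q ^ s.card * (1 - q) ^ (n - s.card - 1) else 0) =
            (fun m => if p < m then q ^ m * (1 - q) ^ (n - m - 1) else 0) s.card := by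
        intro s hs
        simp [mem_powerset.mp hs]
      rw [sum_congr rfl step2,
        Finset.sum_powerset_apply_card
          (f := fun m => if p < m then q ^ m * (1 - q) ^ (n - m - 1) else 0) (x := S), hScard]
      have step3 : ∀ m ∈ Finset.range (k₁ + 1),
          k₁.choose m • (if p < m then q ^ m * (1 - q) ^ (n - m - 1) else 0) =
            (if p < m then (k₁.choose m : ℝ) * q ^ m * (1 - q) ^ (n - m - 1) else 0) := by
        intro m _
        by_cases h : p < m <;> simp [h, mul_assoc]
      rw [sum_congr rfl step3]
      rw [← Finset.sum_subset (show Finset.Icc (p + 1) k₁ ⊆ Finset.range (k₁ + 1) by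
            intro m hm
            rw [mem_Icc] at hm
            rw [mem_range]
            omega)
          (fun m hm hnm => by
            rw [mem_range] at hm
            rw [mem_Icc] at hnm
            rw [if_neg]
            omega)]
      refine sum_congr rfl fun m hm => ?_
      rw [mem_Icc] at hm
      rw [if_pos (by omega)]
  -- the inlier influence
  have F2 : Infl q (fSingle p bstar) i₂ =
      (((n - 1).choose p : ℝ) - ((k₁ - 1).choose p : ℝ)) * (q ^ p * (1 - q) ^ (n - p - 1)) := by
    rw [Infl_formula]
    have step : ∀ s ∈ ((univ : Finset (Fin n)).erase i₂).powerset,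
        (if fSingle p bstar (toF s) ≠ fSingle p bstar (toF (insert i₂ s)) then
            q ^ s.card * (1 - q) ^ (n - s.card - 1) else 0) =
          (if s.card = p ∧ ¬ s ⊆ S then q ^ s.card * (1 - q) ^ (n - s.card - 1) else 0) := by
      intro s hs
      have hi : i₂ ∉ s := fun h => (mem_erase.mp (mem_powerset.mp hs h)).1 rfl
      rw [if_congr (cond2 s hi) rfl rfl]
    rw [sum_congr rfl step, ← sum_filter]
    have hfilt : (((univ : Finset (Fin n)).erase i₂).powerset.filter
        (fun s => s.card = p ∧ ¬ s ⊆ S)) =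
        (powersetCard p ((univ : Finset (Fin n)).erase i₂)).filter (fun s => ¬ s ⊆ S) := by
      rw [powersetCard_eq_filter, filter_filter]
    rw [hfilt]
    have heval : ∀ s ∈ (powersetCard p ((univ : Finset (Fin n)).erase i₂)).filter
        (fun s => ¬ s ⊆ S), q ^ s.card * (1 - q) ^ (n - s.card - 1) =
          q ^ p * (1 - q) ^ (n - p - 1) := by
      intro s hs
      rw [(mem_powersetCard.mp (mem_filter.mp hs).1).2]
    rw [sum_congr rfl heval, sum_const, nsmul_eq_mul]
    congr 1
    have hpos : (powersetCard p ((univ : Finset (Fin n)).erase i₂)).filter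
        (fun s => s ⊆ S) = powersetCard p (S.erase i₂) := by
      ext s
      simp only [mem_filter, mem_powersetCard, subset_erase]
      have := subset_univ s
      tauto
    have hkey := Finset.card_filter_add_card_filter_not
      (s := powersetCard p ((univ : Finset (Fin n)).erase i₂)) (p := fun s => s ⊆ S)
    rw [hpos, card_powersetCard, card_powersetCard, hcard_erase,
      card_erase_of_mem hi₂S, hScard] at hkey
    have h1 : (((powersetCard p ((univ : Finset (Fin n)).erase i₂)).filter
        (fun s => ¬ s ⊆ S)).card : ℝ) = ((n-1).choose p : ℝ) - ((k₁ - 1).choose p : ℝ) := by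
      have := congrArg (Nat.cast (R := ℝ)) hkey
      push_cast at this ⊢
      linarith
    exact h1
  refine ⟨?_, ?_⟩
  · rw [F1, F2]
    ring
  · have hterm : 0 < ((k₁ - 1).choose p : ℝ) * q ^ p * (1 - q) ^ (n - p - 1) := by
      have hc : 0 < (k₁ - 1).choose p := Nat.choose_pos (by omega)
      have : (0:ℝ) < ((k₁ - 1).choose p : ℝ) := by exact_mod_cast hc
      have h1q : (0:ℝ) < 1 - q := by linarith
      positivity
    have hsum : 0 ≤ ∑ l ∈ Finset.Icc (p + 1) k₁,
        (k₁.choose l : ℝ) * q ^ l * (1 - q) ^ (n - l - 1) := by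
      refine Finset.sum_nonneg fun l _ => ?_
      have h1q : (0:ℝ) < 1 - q := by linarith
      positivity
    linarith
end

section
/- (Monotone ordering of influences across structure membership) In the ideal multiple-structure setting, the influence is strictly decreasing in structure membership: if coordinates i and j satisfy (b^{k_s})_i ≥ (b^{k_s})_j for all s ∈ [n₀] with strict inequality for at least one s, then Inf_i^q[f] < Inf_j^q[f]. In particular, a point outlier to all structures has strictly larger influence than a point inlier to at least one structure. -/
open Finset

/-- The monotone Boolean function of several structures `bs`: feasible (value 0)
iff the subset has at most `p` elements or is contained in one of the structures. -/
def fMulti {n n₀ : ℕ} (p : ℕ) (bs : Fin n₀ → Fin n → Bool) (b : Fin n → Bool) : Bool :=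
  if wt b ≤ p ∨ (∃ s, ∀ i, b i ≤ bs s i) then false else true

/-! The swap of coordinates `i` and `j` is a measure-preserving involution of the cube. Since every
structure containing `j` also contains `i`, trading `j` for `i` in a set never destroys
feasibility; for the monotone function `fMulti` this makes the swap carry `i`-pivotal points to
`j`-pivotal ones, so `Inf_i ≤ Inf_j`. Strictness comes from `U ∪ {i, j}`, where `U` is a `p`-subset
of a structure `s₀` containing `i` but not `j`: dropping `j` lands inside `s₀`, while dropping `i`
leaves a `(p+1)`-set through `j`, and a structure containing it would meet `s₀` in `U ∪ {i}`. -/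

variable {n : ℕ}

lemma wt_comp_perm (b : Fin n → Bool) (e : Equiv.Perm (Fin n)) : wt (b ∘ e) = wt b := by
  unfold wt
  rw [← card_map e.toEmbedding, map_filter]
  simp

lemma wt_monotone : Monotone (wt : (Fin n → Bool) → ℕ) := fun _ _ h =>
  card_le_card fun x => by simpa using Bool.le_iff_imp.1 (h x)

lemma wt_decide_mem (A : Finset (Fin n)) : wt (fun x => decide (x ∈ A)) = A.card := by
  simp [wt]

lemma mu_comp_perm (q : ℝ) (b : Fin n → Bool) (e : Equiv.Perm (Fin n)) :
    mu q (b ∘ e) = mu q b := by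
  simp only [mu, wt_comp_perm]

lemma mu_pos {q : ℝ} (hq : q ∈ Set.Ioo (0 : ℝ) 1) (b : Fin n → Bool) : 0 < mu q b := by
  have := sub_pos.2 hq.2
  have := hq.1
  unfold mu
  positivity

section Swap

variable {α β : Type*} [DecidableEq α]

lemma update_comp_swap (b : α → β) (i j : α) (v : β) :
    Function.update b i v ∘ Equiv.swap i j = Function.update (b ∘ Equiv.swap i j) j v := by
  rw [Function.update_comp_equiv, Equiv.symm_swap, Equiv.swap_apply_left]

lemma comp_swap_of_eq {b : α → β} {i j : α} (h : b i = b j) : b ∘ Equiv.swap i j = b := by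
  ext x
  rcases eq_or_ne x i with rfl | hxi
  · simp [h]
  rcases eq_or_ne x j with rfl | hxj
  · simp [h]
  · simp [Equiv.swap_apply_of_ne_of_ne hxi hxj]

lemma comp_swap_comp_swap (b : α → β) (i j : α) :
    (b ∘ Equiv.swap i j) ∘ Equiv.swap i j = b := by
  ext x
  simp

end Swap

lemma bflip_decide_mem_insert {a : Fin n} {A : Finset (Fin n)} (ha : a ∉ A) :
    bflip a (fun x => decide (x ∈ insert a A)) = fun x => decide (x ∈ A) := by
  ext x
  rcases eq_or_ne x a with rfl | hxa
  · simp [bflip, ha]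
  · simp [bflip, hxa]

def IsPivotal (f : (Fin n → Bool) → Bool) (i : Fin n) (b : Fin n → Bool) : Prop :=
  f b ≠ f (bflip i b)

theorem Infl_lt_Infl_of_isPivotal_comp_swap {f : (Fin n → Bool) → Bool} {q : ℝ}
    (hq : q ∈ Set.Ioo (0 : ℝ) 1) {i j : Fin n}
    (hswap : ∀ b, IsPivotal f i b → IsPivotal f j (b ∘ Equiv.swap i j))
    (b₀ : Fin n → Bool) (hi : ¬ IsPivotal f i (b₀ ∘ Equiv.swap i j)) (hj : IsPivotal f j b₀) :
    Infl q f i < Infl q f j := by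
  have hσ : Function.Involutive fun b : Fin n → Bool => b ∘ Equiv.swap i j :=
    fun b => comp_swap_comp_swap b i j
  unfold Infl
  rw [← Fintype.sum_bijective _ hσ.bijective _ _ fun _ => rfl]
  refine sum_lt_sum (fun b _ => ?_) ⟨b₀, mem_univ _, ?_⟩
  · split_ifs with hbi hbj
    · exact (mu_comp_perm q b _).le
    · exact absurd (comp_swap_comp_swap b i j ▸ hswap _ hbi) hbj
    · exact (mu_pos hq b).le
    · rfl
  · unfold IsPivotal at hi hj
    rw [if_neg hi, if_pos hj]
    exact mu_pos hq b₀

theorem isPivotal_iff_of_monotone {f : (Fin n → Bool) → Bool} (hf : Monotone f) (i : Fin n)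
    (b : Fin n → Bool) :
    IsPivotal f i b ↔
      f (Function.update b i false) = false ∧ f (Function.update b i true) = true := by
  have hle : f (Function.update b i false) ≤ f (Function.update b i true) :=
    hf (update_le_update_iff'.2 (Bool.false_le _))
  have hpiv : IsPivotal f i b ↔ f (Function.update b i false) ≠ f (Function.update b i true) := by
    unfold IsPivotal bflip
    cases hbi : b i
    · rw [← hbi, Function.update_eq_self, hbi]
      rfl
    · rw [← hbi, Function.update_eq_self, hbi, ne_comm]
      rfl
  rw [hpiv]
  revert hle
  cases f (Function.update b i false) <;> cases f (Function.update b i true) <;> decide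

theorem isPivotal_comp_swap {f : (Fin n → Bool) → Bool} (hf : Monotone f) {i j : Fin n}
    (hex : ∀ c, c i = false → c j = true → f (c ∘ Equiv.swap i j) ≤ f c)
    {b : Fin n → Bool} (hb : IsPivotal f i b) : IsPivotal f j (b ∘ Equiv.swap i j) := by
  rw [isPivotal_iff_of_monotone hf] at hb ⊢
  rw [← update_comp_swap, ← update_comp_swap]
  obtain ⟨hlow, hhigh⟩ := hb
  constructor
  · set c := Function.update b i false
    have hci : c i = false := by simp [c]
    cases hcj : c j
    · rwa [comp_swap_of_eq (hci.trans hcj.symm)]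
    · have := hex c hci hcj
      rw [hlow] at this
      exact le_bot_iff.1 this
  · set d := Function.update b i true
    have hdi : d i = true := by simp [d]
    cases hdj : d j
    · have := hex (d ∘ Equiv.swap i j) (by simpa using hdj) (by simpa using hdi)
      rw [comp_swap_comp_swap, hhigh] at this
      exact top_le_iff.1 this
    · rwa [comp_swap_of_eq (hdi.trans hdj.symm)]

section fMulti

variable {n₀ p : ℕ} {bs : Fin n₀ → Fin n → Bool}

lemma fMulti_eq_false_iff {b : Fin n → Bool} :
    fMulti p bs b = false ↔ wt b ≤ p ∨ ∃ s, b ≤ bs s := by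
  unfold fMulti
  split_ifs with h <;> simp_all [Pi.le_def]

lemma fMulti_monotone : Monotone (fMulti p bs) := by
  intro b b' hbb'
  cases hb' : fMulti p bs b'
  · rw [fMulti_eq_false_iff] at hb'
    have hb : fMulti p bs b = false := fMulti_eq_false_iff.2 <|
      hb'.imp (wt_monotone hbb').trans fun ⟨s, hs⟩ => ⟨s, hbb'.trans hs⟩
    rw [hb]
  · exact le_top

lemma fMulti_comp_swap_le {i j : Fin n} (hdom : ∀ s, bs s j ≤ bs s i) {c : Fin n → Bool}
    (hcj : c j = true) : fMulti p bs (c ∘ Equiv.swap i j) ≤ fMulti p bs c := by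
  cases hc : fMulti p bs c
  · rw [fMulti_eq_false_iff] at hc
    refine (fMulti_eq_false_iff.2 ?_).le
    rw [wt_comp_perm]
    refine hc.imp id fun ⟨s, hs⟩ => ⟨s, fun x => ?_⟩
    have hsj : bs s j = true := Bool.le_iff_imp.1 (hs j) hcj
    have hsi : bs s i = true := Bool.le_iff_imp.1 (hdom s) hsj
    rcases eq_or_ne x i with rfl | hxi
    · simp [hsi]
    rcases eq_or_ne x j with rfl | hxj
    · simp [hsj]
    · simpa [Equiv.swap_apply_of_ne_of_ne hxi hxj] using hs x
  · exact le_top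

lemma fMulti_decide_mem_insert_eq_true {i j : Fin n} (hdom : ∀ s, bs s j ≤ bs s i)
    (hideal : ∀ s t, s ≠ t →
      (Finset.univ.filter fun i' => bs s i' = true ∧ bs t i' = true).card ≤ p)
    {s₀ : Fin n₀} {U : Finset (Fin n)} (hU : ∀ x ∈ insert i U, bs s₀ x = true)
    (hcard : p < (insert i U).card) (hj : bs s₀ j = false) :
    fMulti p bs (fun x => decide (x ∈ insert j U)) = true := by
  have hjU : j ∉ U := fun h => by simp [hU j (mem_insert_of_mem h)] at hj
  by_contra hfeas
  rw [Bool.not_eq_true, fMulti_eq_false_iff, wt_decide_mem, card_insert_of_notMem hjU] at hfeas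
  rcases hfeas with hsmall | ⟨t, ht⟩
  · have := card_insert_le i U
    omega
  · have htj : bs t j = true := Bool.le_iff_imp.1 (ht j) (by simp)
    have hts : s₀ ≠ t := by
      rintro rfl
      simp [hj] at htj
    have hsub : insert i U ⊆ univ.filter fun x => bs s₀ x = true ∧ bs t x = true := by
      intro x hx
      simp only [mem_filter, mem_univ, true_and]
      refine ⟨hU x hx, ?_⟩
      rcases mem_insert.1 hx with rfl | hxU
      · exact Bool.le_iff_imp.1 (hdom t) htj
      · exact Bool.le_iff_imp.1 (ht x) (by simp [hxU])
    exact absurd (hideal s₀ t hts) (not_le.2 (hcard.trans_le (card_le_card hsub)))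

theorem exists_isPivotal_fMulti {i j : Fin n} (hdom : ∀ s, bs s j ≤ bs s i)
    (hideal : ∀ s t, s ≠ t →
      (Finset.univ.filter fun i' => bs s i' = true ∧ bs t i' = true).card ≤ p)
    {s₀ : Fin n₀} (hk : p < wt (bs s₀)) (hj : bs s₀ j = false) (hi : bs s₀ i = true) :
    ∃ b, ¬ IsPivotal (fMulti p bs) i (b ∘ Equiv.swap i j) ∧ IsPivotal (fMulti p bs) j b := by
  have hij : i ≠ j := by
    rintro rfl
    simp [hi] at hj
  set S := univ.filter fun x => bs s₀ x = true
  obtain ⟨U, hUS, hUcard⟩ := exists_subset_card_eq (s := S.erase i) (n := p) <| by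
    rw [card_erase_of_mem (by simp [S, hi])]
    exact Nat.le_sub_one_of_lt hk
  have hiU : i ∉ U := fun h => by simpa using hUS h
  have hjU : j ∉ U := fun h => by simpa [S, hj] using hUS h
  have hU : ∀ x ∈ insert i U, bs s₀ x = true := by
    simp only [mem_insert, forall_eq_or_imp, hi, true_and]
    exact fun x hx => by simpa [S] using mem_of_mem_erase (hUS hx)
  have hjU_infeasible := fMulti_decide_mem_insert_eq_true hdom hideal hU
    (by rw [card_insert_of_notMem hiU, hUcard]; omega) hj
  have hiU_feasible : fMulti p bs (fun x => decide (x ∈ insert i U)) = false :=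
    fMulti_eq_false_iff.2 <|
      Or.inr ⟨s₀, fun x => Bool.le_iff_imp.2 fun hx => hU x (by simpa using hx)⟩
  set b := fun x => decide (x ∈ insert i (insert j U))
  have hb : fMulti p bs b = true := by
    refine Bool.le_iff_imp.1 (fMulti_monotone fun x => ?_) hjU_infeasible
    simp only [b, Bool.le_iff_imp, decide_eq_true_eq]
    exact mem_insert_of_mem
  refine ⟨b, ?_, ?_⟩
  · rw [comp_swap_of_eq (by simp [b]), IsPivotal, bflip_decide_mem_insert (by simp [hij, hiU]),
      hb, hjU_infeasible]
    simp
  · have hflip : bflip j b = fun x => decide (x ∈ insert i U) := by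
      simp only [b, insert_comm i j]
      exact bflip_decide_mem_insert (by simp [hij.symm, hjU])
    rw [IsPivotal, hflip, hb, hiU_feasible]
    simp

end fMulti

theorem ideal_multi_influence_strict_order_general {n n₀ p : ℕ} (k : Fin n₀ → ℕ)
    (hpk : ∀ s, p < k s)
    (q : ℝ) (hq : q ∈ Set.Ioo (0:ℝ) 1)
    (bs : Fin n₀ → Fin n → Bool) (hwt : ∀ s, wt (bs s) = k s)
    (hideal : ∀ s t, s ≠ t →
      (Finset.univ.filter fun i' => bs s i' = true ∧ bs t i' = true).card ≤ p)
    (i j : Fin n) (hdom : ∀ s, bs s j ≤ bs s i)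
    (hstrict : ∃ s, bs s j = false ∧ bs s i = true) :
    Infl q (fMulti p bs) i < Infl q (fMulti p bs) j := by
  obtain ⟨s₀, hj, hi⟩ := hstrict
  obtain ⟨b₀, hb₀i, hb₀j⟩ :=
    exists_isPivotal_fMulti hdom hideal (hwt s₀ ▸ hpk s₀) hj hi
  have hswap : ∀ b, IsPivotal (fMulti p bs) i b → IsPivotal (fMulti p bs) j (b ∘ Equiv.swap i j) :=
    fun _ => isPivotal_comp_swap fMulti_monotone fun _ _ hcj => fMulti_comp_swap_le hdom hcj
  exact Infl_lt_Infl_of_isPivotal_comp_swap hq hswap b₀ hb₀i hb₀j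

theorem ideal_multi_influence_strict_order {n n₀ p : ℕ} (k : Fin n₀ → ℕ)
    (hpk : ∀ s, p < k s) (hkn : ∀ s, k s < n)
    (q : ℝ) (hq : q ∈ Set.Ioo (0:ℝ) 1)
    (bs : Fin n₀ → Fin n → Bool) (hwt : ∀ s, wt (bs s) = k s)
    (hideal : ∀ s t, s ≠ t →
      (Finset.univ.filter fun i' => bs s i' = true ∧ bs t i' = true).card ≤ p)
    (i j : Fin n) (hdom : ∀ s, bs s j ≤ bs s i)
    (hstrict : ∃ s, bs s j = false ∧ bs s i = true) :
    Infl q (fMulti p bs) i < Infl q (fMulti p bs) j :=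
  ideal_multi_influence_strict_order_general k hpk q hq bs hwt hideal i j hdom hstrict
end
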